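/- Let (R, m) be a Noetherian local ring, I an m-primary ideal, and M a finitely generated R-module. Then for all sufficiently large n, ℓ_R((I^{n+1}M :_M m)/I^{n+1}M) = ℓ_R([(I^{n+1}M :_M m) ∩ I^n M]/I^{n+1}M) + ℓ_R(0 :_M m). -/

import Mathlib

open IsLocalRing Submodule

/-- The colon submodule `(N :_M J) = {x ∈ M ∣ J x ⊆ N}`. -/
def Submodule.colonBy {R M : Type*} [CommRing R] [AddCommGroup M] [Module R M]
    (N : Submodule R M) (J : Ideal R) : Submodule R M where
  carrier := {x | ∀ r ∈ J, r • x ∈ N}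
  add_mem' := fun {a b} ha hb r hr => by
    rw [smul_add]; exact N.add_mem (ha r hr) (hb r hr)
  zero_mem' := fun r hr => by rw [smul_zero]; exact N.zero_mem
  smul_mem' := fun c {x} hx r hr => by
    rw [smul_comm]; exact N.smul_mem c (hx r hr)

/-- The length of a module: the height of `⊤` in its lattice of submodules. -/
noncomputable def moduleLength (R M : Type*) [Ring R] [AddCommGroup M] [Module R M] : ℕ∞ :=
  Order.height (⊤ : Submodule R M)


universe u v

section OrderLemmas


private lemma height_add_one_le' {α : Type*} [Preorder α] {x y : α} (h : x < y) :
    Order.height x + 1 ≤ Order.height y := by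
  rw [Order.height_eq_iSup_lt_height y]
  exact le_iSup₂_of_le x h le_rfl

private lemma length_le_height_add_height {α β γ : Type*} [Preorder α] [Preorder β] [Preorder γ]
    (f : α → β) (g : α → γ) (hf : Monotone f) (hg : Monotone g)
    (hs : ∀ ⦃x y : α⦄, x < y → f x < f y ∨ g x < g y) :
    ∀ (n : ℕ) (p : LTSeries α), p.length = n →
      (p.length : ℕ∞) ≤ Order.height (f p.last) + Order.height (g p.last) := by
  intro n
  induction n with
  | zero => intro p hn; rw [hn]; simp
  | succ n ih =>
    intro p hn
    have hne : p.length ≠ 0 := by omega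
    have hlt : p.eraseLast.last < p.last := p.eraseLast_last_rel_last hne
    have hlen : p.eraseLast.length = n := by
      simp [RelSeries.eraseLast]; omega
    have H := ih p.eraseLast hlen
    rw [hlen] at H
    rw [hn]
    have hcast : ((n + 1 : ℕ) : ℕ∞) = (n : ℕ∞) + 1 := by push_cast; ring
    rw [hcast]
    rcases hs hlt with h | h
    · calc (n : ℕ∞) + 1
          ≤ (Order.height (f p.eraseLast.last) + Order.height (g p.eraseLast.last)) + 1 := by
            gcongr
      _ = (Order.height (f p.eraseLast.last) + 1) + Order.height (g p.eraseLast.last) := by ring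
      _ ≤ Order.height (f p.last) + Order.height (g p.last) :=
            add_le_add (height_add_one_le' h) (Order.height_mono (hg hlt.le))
    · calc (n : ℕ∞) + 1
          ≤ (Order.height (f p.eraseLast.last) + Order.height (g p.eraseLast.last)) + 1 := by
            gcongr
      _ = Order.height (f p.eraseLast.last) + (Order.height (g p.eraseLast.last) + 1) := by ring
      _ ≤ Order.height (f p.last) + Order.height (g p.last) :=
            add_le_add (Order.height_mono (hf hlt.le)) (height_add_one_le' h)

private lemma moduleLength_aux_le {R X : Type*} [Ring R] [AddCommGroup X] [Module R X]
    (N : Submodule R X) :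
    Order.height (⊤ : Submodule R X) ≤
      Order.height (⊤ : Submodule R N) + Order.height (⊤ : Submodule R (X ⧸ N)) := by
  have key : ∀ p : LTSeries (Submodule R X), p.last = ⊤ →
      (p.length : ℕ∞) ≤ Order.height (⊤ : Submodule R N) + Order.height (⊤ : Submodule R (X ⧸ N)) := by
    intro p hp
    have := length_le_height_add_height (fun p' => Submodule.comap N.subtype p')
      (fun p' => Submodule.map N.mkQ p')
      (fun _ _ h => Submodule.comap_mono h) (fun _ _ h => Submodule.map_mono h)
      (fun x y hxy => by
        rcases (inf_le_inf_right N hxy.le).lt_or_eq with hinf | hinf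
        · left
          refine lt_of_le_of_ne (Submodule.comap_mono hxy.le) (fun e1 => ?_)
          have := congrArg (Submodule.map N.subtype) e1
          rw [Submodule.map_comap_subtype, Submodule.map_comap_subtype,
            inf_comm N x, inf_comm N y] at this
          exact hinf.ne this
        · right
          have hsup : x ⊔ N < y ⊔ N := sup_lt_sup_of_lt_of_inf_le_inf hxy hinf.ge
          refine lt_of_le_of_ne (Submodule.map_mono hxy.le) (fun e2 => ?_)
          have := congrArg (Submodule.comap N.mkQ) e2
          rw [Submodule.comap_map_mkQ, Submodule.comap_map_mkQ,
            sup_comm N x, sup_comm N y] at this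
          exact hsup.ne this) p.length p rfl
    rw [hp] at this
    simpa using this
  exact Order.height_le fun p hp => key p hp

private lemma moduleLength_aux_ge {R X : Type*} [Ring R] [AddCommGroup X] [Module R X]
    (N : Submodule R X) :
    Order.height (⊤ : Submodule R N) + Order.height (⊤ : Submodule R (X ⧸ N)) ≤
      Order.height (⊤ : Submodule R X) := by
  rw [Order.height_eq_iSup_last_eq (⊤ : Submodule R N),
    Order.height_eq_iSup_last_eq (⊤ : Submodule R (X ⧸ N))]
  apply ENat.biSup_add_biSup_le' (p := fun (p : LTSeries (Submodule R N)) => p.last = ⊤)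
    (q := fun (q : LTSeries (Submodule R (X ⧸ N))) => q.last = ⊤)
    ⟨RelSeries.singleton _ ⊤, rfl⟩ ⟨RelSeries.singleton _ ⊤, rfl⟩
  intro p hp q hq
  -- map p into Submodule R X via map N.subtype, map q via comap N.mkQ
  have hmapinj : Function.Injective (Submodule.map N.subtype) :=
    Submodule.map_injective_of_injective N.injective_subtype
  have hcominj : Function.Injective (Submodule.comap N.mkQ) :=
    Submodule.comap_injective_of_surjective N.mkQ_surjective
  have hmapmono : Monotone (Submodule.map N.subtype) := fun _ _ h => Submodule.map_mono h
  have hcommono : Monotone (Submodule.comap N.mkQ) := fun _ _ h => Submodule.comap_mono h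
  let p' : LTSeries (Submodule R X) := p.map (Submodule.map N.subtype)
    (hmapmono.strictMono_of_injective hmapinj)
  let q' : LTSeries (Submodule R X) := q.map (Submodule.comap N.mkQ)
    (hcommono.strictMono_of_injective hcominj)
  have hp' : p'.last = N := by
    show Submodule.map N.subtype p.last = N
    rw [hp, Submodule.map_top, Submodule.range_subtype]
  have hq'last : q'.last = ⊤ := by
    show Submodule.comap N.mkQ q.last = ⊤
    rw [hq, Submodule.comap_top]
  have hq'head : N ≤ q'.head := by
    show N ≤ Submodule.comap N.mkQ q.head
    intro x hx
    simp only [Submodule.mem_comap]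
    have : N.mkQ x = 0 := (Submodule.Quotient.mk_eq_zero N).2 hx
    rw [this]; exact zero_mem _
  rcases eq_or_lt_of_le hq'head with heq | hlt
  · have hconn : p'.last = q'.head := by rw [hp', heq]
    have := Order.length_le_height (p := p'.smash q' hconn) (x := (⊤ : Submodule R X)) le_top
    have hlen : (p'.smash q' hconn).length = p.length + q.length := rfl
    rw [hlen] at this
    exact_mod_cast this
  · have hconn : p'.last < q'.head := by rw [hp']; exact hlt
    have := Order.length_le_height (p := p'.append q' hconn) (x := (⊤ : Submodule R X)) le_top
    have hlen : (p'.append q' hconn).length = p.length + q.length + 1 := rfl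
    rw [hlen] at this
    calc ((p.length + q.length : ℕ) : ℕ∞) ≤ ((p.length + q.length + 1 : ℕ) : ℕ∞) := by
          exact_mod_cast Nat.le_succ _
    _ ≤ _ := this

end OrderLemmas

section AssPrimes


private lemma isAssociatedPrime_sub_or_quot {R X : Type*} [CommRing R] [IsNoetherianRing R] [AddCommGroup X]
    [Module R X] (N : Submodule R X) {p : Ideal R} (hp : IsAssociatedPrime p X) :
    IsAssociatedPrime p ↥N ∨ IsAssociatedPrime p (X ⧸ N) := by
  obtain ⟨hp1, x, hx⟩ := isAssociatedPrime_iff.mp hp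
  by_cases h : ∀ r : R, r • x ∈ N → r • x = 0
  · right
    refine isAssociatedPrime_iff.mpr ⟨hp1, N.mkQ x, ?_⟩
    ext r
    rw [Submodule.mem_colon_singleton, Submodule.mem_bot]
    constructor
    · intro hr
      have : r • x = 0 := by
        rw [hx] at hr; rwa [Submodule.mem_colon_singleton, Submodule.mem_bot] at hr
      show r • N.mkQ x = 0
      rw [← map_smul, this, map_zero]
    · intro hr
      have : N.mkQ (r • x) = 0 := by rw [map_smul]; exact hr
      have hrN : r • x ∈ N := (Submodule.Quotient.mk_eq_zero N).1 this
      rw [hx, Submodule.mem_colon_singleton, Submodule.mem_bot]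
      exact h r hrN
  · push_neg at h
    obtain ⟨r, hrN, hr0⟩ := h
    left
    have hrp : r ∉ p := by
      rw [hx, Submodule.mem_colon_singleton, Submodule.mem_bot]; exact hr0
    refine isAssociatedPrime_iff.mpr ⟨hp1, ⟨r • x, hrN⟩, ?_⟩
    ext r'
    rw [Submodule.mem_colon_singleton, Submodule.mem_bot]
    have hval : ∀ (c : R), (c • (⟨r • x, hrN⟩ : ↥N) : ↥N) = 0 ↔ c • (r • x) = 0 := by
      intro c
      rw [Subtype.ext_iff]
      rfl
    rw [hval, smul_smul]
    constructor
    · intro hr'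
      have h1 : r' * r ∈ p := p.mul_mem_right r hr'
      rw [hx, Submodule.mem_colon_singleton, Submodule.mem_bot] at h1
      exact h1
    · intro hr'
      have h1 : r' * r ∈ p := by rw [hx, Submodule.mem_colon_singleton, Submodule.mem_bot]; exact hr'
      rcases hp1.mem_or_mem h1 with h | h
      · exact h
      · exact absurd h hrp

private lemma finite_associatedPrimes_quotient {R X : Type*} [CommRing R] [IsNoetherianRing R]
    [AddCommGroup X] [Module R X] [Module.Finite R X] :
    ∀ N : Submodule R X, (associatedPrimes R (X ⧸ N)).Finite := by
  have hwf : WellFounded ((· > ·) : Submodule R X → Submodule R X → Prop) :=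
    (isNoetherian_iff (R := R) (M := X)).mp inferInstance
  intro N
  induction N using hwf.induction with
  | _ N IH =>
  rcases subsingleton_or_nontrivial (X ⧸ N) with hs | hnt
  · rw [associatedPrimes.eq_empty_of_subsingleton]
    exact Set.finite_empty
  · obtain ⟨xb, hxb⟩ := exists_ne (0 : X ⧸ N)
    obtain ⟨P, hP, -⟩ := exists_le_isAssociatedPrime_of_isNoetherianRing R xb hxb
    obtain ⟨hPprime, yb, hyb⟩ := isAssociatedPrime_iff.mp hP
    have hyb0 : yb ≠ 0 := by
      rintro rfl
      apply hPprime.ne_top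
      rw [hyb, Submodule.colon_singleton_zero]
    obtain ⟨y, rfl⟩ := N.mkQ_surjective yb
    set N' : Submodule R X := N ⊔ R ∙ y with hN'
    have hNN' : N < N' := by
      refine lt_of_le_of_ne le_sup_left (fun he => ?_)
      apply hyb0
      have hy : y ∈ N := by
        rw [he]
        exact Submodule.mem_sup_right (Submodule.mem_span_singleton_self y)
      exact (Submodule.Quotient.mk_eq_zero N).2 hy
    have IH' := IH N' hNN'
    set K : Submodule R (X ⧸ N) := Submodule.map N.mkQ N' with hK
    have hKspan : K = R ∙ (N.mkQ y) := by
      rw [hK, hN', Submodule.map_sup, Submodule.map_span, Set.image_singleton]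
      have : Submodule.map N.mkQ N = ⊥ := by
        refine le_antisymm ?_ bot_le
        rw [Submodule.map_le_iff_le_comap]
        intro z hz
        simp only [Submodule.mem_comap, Submodule.mem_bot]
        exact (Submodule.Quotient.mk_eq_zero N).2 hz
      rw [this, bot_sup_eq]
    -- Ass(X/N) ⊆ Ass(K) ∪ Ass((X/N)/K), Ass((X/N)/K) = Ass(X/N'), Ass(K) = {P}
    have hsub : associatedPrimes R (X ⧸ N) ⊆
        associatedPrimes R ↥K ∪ associatedPrimes R ((X ⧸ N) ⧸ K) := by
      intro p hp
      exact isAssociatedPrime_sub_or_quot K hp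
    apply Set.Finite.subset _ hsub
    apply Set.Finite.union
    · -- K ≅ R ⧸ P
      have hKP : associatedPrimes R ↥K ⊆ {P} := by
        have f := LinearMap.toSpanSingleton R (X ⧸ N) (N.mkQ y)
        have hker : LinearMap.ker (LinearMap.toSpanSingleton R (X ⧸ N) (N.mkQ y)) = P := by
          ext r
          rw [LinearMap.mem_ker, hyb, Submodule.mem_colon_singleton, Submodule.mem_bot]
          rfl
        have hrange : LinearMap.range (LinearMap.toSpanSingleton R (X ⧸ N) (N.mkQ y)) = K := by
          rw [hKspan]
          exact (LinearMap.span_singleton_eq_range R (X ⧸ N) (N.mkQ y)).symm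
        have e1 : (R ⧸ P) ≃ₗ[R] ↥K :=
          (Submodule.quotEquivOfEq _ _ hker.symm).trans
            ((LinearMap.toSpanSingleton R (X ⧸ N) (N.mkQ y)).quotKerEquivRange.trans
              (LinearEquiv.ofEq _ _ hrange))
        rw [← LinearEquiv.AssociatedPrimes.eq e1]
        have : associatedPrimes R (R ⧸ P) = {P.radical} :=
          associatedPrimes.eq_singleton_of_isPrimary hPprime.isPrimary
        rw [this, hPprime.radical]
      exact (Set.finite_singleton P).subset hKP
    · have e2 : ((X ⧸ N) ⧸ K) ≃ₗ[R] (X ⧸ N') :=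
        Submodule.quotientQuotientEquivQuotient N N' hNN'.le
      rw [LinearEquiv.AssociatedPrimes.eq e2]
      exact IH'

private lemma finite_associatedPrimes {R X : Type*} [CommRing R] [IsNoetherianRing R]
    [AddCommGroup X] [Module R X] [Module.Finite R X] :
    (associatedPrimes R X).Finite := by
  have := finite_associatedPrimes_quotient (R := R) (X := X) ⊥
  rwa [LinearEquiv.AssociatedPrimes.eq (Submodule.quotEquivOfEqBot ⊥ rfl)] at this

end AssPrimes

lemma Submodule.mem_colonBy' {R M : Type*} [CommRing R] [AddCommGroup M] [Module R M]
    {N : Submodule R M} {J : Ideal R} {x : M} :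
    x ∈ N.colonBy J ↔ ∀ r ∈ J, r • x ∈ N := Iff.rfl

section RegularElt
private lemma exists_isSMulRegular_of_socle_eq_bot {R M' : Type*} [CommRing R]
    [IsNoetherianRing R] [IsLocalRing R] [AddCommGroup M'] [Module R M'] [Module.Finite R M']
    (I : Ideal R) (hI : I.radical = maximalIdeal R)
    (hsoc : (⊥ : Submodule R M').colonBy (maximalIdeal R) = ⊥) :
    ∃ b ∈ I, IsSMulRegular M' b := by
  rcases subsingleton_or_nontrivial M' with hs | hnt
  · exact ⟨0, I.zero_mem, fun x y _ => Subsingleton.elim x y⟩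
  by_contra hcon
  push_neg at hcon
  have hzd : (I : Set R) ⊆ ⋃ p ∈ associatedPrimes R M', (p : Set R) := by
    intro b hb
    have hnr := hcon b hb
    rw [IsSMulRegular, Function.not_injective_iff] at hnr
    obtain ⟨u, v, huv, hne⟩ := hnr
    have h0 : b • (u - v) = 0 := by rw [smul_sub, huv, sub_self]
    have hx0 : u - v ≠ 0 := sub_ne_zero.2 hne
    have : b ∈ {r : R | ∃ x : M', x ≠ 0 ∧ r • x = 0} := ⟨u - v, hx0, h0⟩
    rwa [← biUnion_associatedPrimes_eq_zero_divisors] at this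
  have hfin : (associatedPrimes R M').Finite := finite_associatedPrimes
  have hsubset : (I : Set R) ⊆ ⋃ p ∈ (hfin.toFinset : Set (Ideal R)), (p : Set R) := by
    rwa [hfin.coe_toFinset]
  have hp : ∀ p ∈ hfin.toFinset, p ≠ (⊥ : Ideal R) → p ≠ (⊥ : Ideal R) → p.IsPrime := by
    intro p hp _ _
    rw [Set.Finite.mem_toFinset] at hp
    exact hp.isPrime
  obtain ⟨p, hps, hIp⟩ := (Ideal.subset_union_prime (⊥ : Ideal R) (⊥ : Ideal R) hp).1 hsubset
  rw [Set.Finite.mem_toFinset] at hps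
  have hpprime : p.IsPrime := hps.isPrime
  have hmp : maximalIdeal R ≤ p := by
    rw [← hI, ← hpprime.radical]
    exact Ideal.radical_mono hIp
  have hpm : p = maximalIdeal R := le_antisymm (le_maximalIdeal hpprime.ne_top) hmp
  obtain ⟨-, x, hx⟩ := isAssociatedPrime_iff.mp hps
  have hxsoc : x ∈ (⊥ : Submodule R M').colonBy (maximalIdeal R) := by
    intro r hr
    have : r ∈ p := hpm ▸ hr
    rw [hx, Submodule.mem_colon_singleton, Submodule.mem_bot] at this
    simp [this]
  rw [hsoc] at hxsoc
  have : x = (0 : M') := hxsoc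
  rw [this] at hx
  apply hpprime.ne_top
  rw [hx, Submodule.colon_singleton_zero]

end RegularElt

section OneUniverse

variable {R M : Type u} [CommRing R] [AddCommGroup M] [Module R M]

private lemma pow_succ_smul' (I : Ideal R) (j : ℕ) (N : Submodule R M) :
    (I ^ (j+1) : Ideal R) • N = I • ((I ^ j : Ideal R) • N) := by
  rw [pow_succ', ← Submodule.smul_assoc, Ideal.smul_eq_mul]

-- Artin-Rees, weak form
private lemma AR1 [IsNoetherianRing R] [Module.Finite R M] (I : Ideal R) (N : Submodule R M) :
    ∃ k : ℕ, ∀ n ≥ k, ((I ^ n • ⊤ : Submodule R M) ⊓ N) ≤ I ^ (n - k) • N := by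
  obtain ⟨k, hk⟩ := Ideal.exists_pow_inf_eq_pow_smul I N
  refine ⟨k, fun n hn => ?_⟩
  rw [hk n hn]
  exact Submodule.smul_mono le_rfl inf_le_right

-- stability of the colon filtration
private lemma AR2 [IsNoetherianRing R] [Module.Finite R M] (I : Ideal R) :
    ∃ k : ℕ, ∀ j ≥ k,
      (((I ^ (j+2) • ⊤ : Submodule R M).colonBy I) ⊓ (I ^ j • ⊤ : Submodule R M))
        ≤ (I ^ (j+1) • ⊤ : Submodule R M) := by
  set C : Ideal.Filtration I M := {
    N := fun k => ((I ^ (k+2) • ⊤ : Submodule R M).colonBy I)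
    mono := fun k x hx r hr =>
      Submodule.smul_mono_left (Ideal.pow_le_pow_right (by omega)) (hx r hr)
    smul_le := fun k => Submodule.smul_le.2 (fun r hr x hx r' hr' => by
      rw [smul_comm, pow_succ_smul']
      exact Submodule.smul_mem_smul hr (hx r' hr')) } with hC
  have hstab : (I.stableFiltration (⊤ : Submodule R M) ⊓ C).Stable :=
    (I.stableFiltration_stable ⊤).inter_right C
  obtain ⟨k0, hst⟩ := hstab
  refine ⟨k0 + 1, fun j hj x hx => ?_⟩
  obtain ⟨k, rfl⟩ : ∃ k, j = k + 1 := ⟨j - 1, by omega⟩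
  have hk0 : k0 ≤ k := by omega
  have hmem : x ∈ (I.stableFiltration (⊤ : Submodule R M) ⊓ C).N (k + 1) := by
    refine Submodule.mem_inf.2 ⟨hx.2, ?_⟩
    intro r hr
    exact Submodule.smul_mono_left (Ideal.pow_le_pow_right (by omega)) (hx.1 r hr)
  rw [← hst k hk0] at hmem
  have hle : I • (I.stableFiltration (⊤ : Submodule R M) ⊓ C).N k
      ≤ (I ^ (k+2) • ⊤ : Submodule R M) :=
    Submodule.smul_le.2 (fun r hr z hz => (Submodule.mem_inf.1 hz).2 r hr)
  exact hle hmem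

end OneUniverse

section Transfer

variable {R : Type u} {M : Type v} [CommRing R] [AddCommGroup M] [Module R M]

private def idealUp (I : Ideal R) : Ideal (ULift.{v} R) where
  carrier := {r | r.down ∈ I}
  add_mem' := fun {a b} ha hb => I.add_mem ha hb
  zero_mem' := I.zero_mem
  smul_mem' := fun c {x} hx => I.mul_mem_left c.down hx

private lemma mem_idealUp {I : Ideal R} {r : ULift.{v} R} : r ∈ idealUp I ↔ r.down ∈ I := Iff.rfl

private def submoduleUp (N : Submodule R M) : Submodule (ULift.{v} R) (ULift.{u} M) where
  carrier := {x | x.down ∈ N}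
  add_mem' := fun {a b} ha hb => N.add_mem ha hb
  zero_mem' := N.zero_mem
  smul_mem' := fun c {x} hx => N.smul_mem c.down hx

private lemma mem_submoduleUp {N : Submodule R M} {x : ULift.{u} M} :
    x ∈ submoduleUp N ↔ x.down ∈ N := Iff.rfl

private lemma mem_smul_up {J : Ideal R} {N : Submodule R M} (x : ULift.{u} M) :
    x ∈ (idealUp J : Ideal (ULift.{v} R)) • submoduleUp N ↔ x.down ∈ J • N := by
  constructor
  · intro hx
    have : ∀ y ∈ (idealUp J : Ideal (ULift.{v} R)) • submoduleUp N, y.down ∈ J • N := by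
      intro y hy
      refine Submodule.smul_induction_on hy (fun r hr z hz => ?_) (fun y₁ y₂ h₁ h₂ => ?_)
      · exact Submodule.smul_mem_smul hr hz
      · exact Submodule.add_mem _ h₁ h₂
    exact this x hx
  · intro hx
    have : ∀ y ∈ J • N, ULift.up y ∈ (idealUp J : Ideal (ULift.{v} R)) • submoduleUp N := by
      intro y hy
      refine Submodule.smul_induction_on hy (fun r hr z hz => ?_) (fun y₁ y₂ h₁ h₂ => ?_)
      · exact Submodule.smul_mem_smul (show (ULift.up.{v} r) ∈ idealUp J from hr)
          (show (ULift.up.{u} z) ∈ submoduleUp N from hz)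
      · exact Submodule.add_mem _ h₁ h₂
    exact this x.down hx
end Transfer

section Transfer2

variable {R : Type u} {M : Type v} [CommRing R] [AddCommGroup M] [Module R M]

private lemma idealUp_mul (I J : Ideal R) :
    (idealUp I * idealUp J : Ideal (ULift.{v} R)) = idealUp (I * J) := by
  apply le_antisymm
  · refine Ideal.mul_le.2 (fun a ha b hb => ?_)
    show (a * b).down ∈ I * J
    exact Ideal.mul_mem_mul ha hb
  · intro r hr
    have : ∀ y ∈ I * J, (ULift.up.{v} y) ∈ (idealUp I * idealUp J : Ideal (ULift.{v} R)) := by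
      intro y hy
      refine Submodule.mul_induction_on hy (fun a ha b hb => ?_) (fun y₁ y₂ h₁ h₂ => ?_)
      · exact Ideal.mul_mem_mul (show (ULift.up.{v} a) ∈ idealUp I from ha)
          (show (ULift.up.{v} b) ∈ idealUp J from hb)
      · exact Ideal.add_mem _ h₁ h₂
    exact this r.down hr

private lemma idealUp_pow (I : Ideal R) (n : ℕ) :
    ((idealUp I : Ideal (ULift.{v} R)) ^ n) = idealUp (I ^ n) := by
  induction n with
  | zero =>
    ext r
    simp only [pow_zero, Ideal.one_eq_top]
    exact Iff.rfl |>.trans (by constructor <;> intro <;> trivial)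
  | succ n ih => rw [pow_succ, ih, idealUp_mul, ← pow_succ]

private lemma mem_pow_smul_up (I : Ideal R) (n : ℕ) (N : Submodule R M) (x : ULift.{u} M) :
    x ∈ ((idealUp I : Ideal (ULift.{v} R)) ^ n • submoduleUp N :
      Submodule (ULift.{v} R) (ULift.{u} M)) ↔ x.down ∈ (I ^ n • N : Submodule R M) := by
  rw [idealUp_pow]
  exact mem_smul_up x

private lemma submoduleUp_top :
    (submoduleUp (⊤ : Submodule R M) : Submodule (ULift.{v} R) (ULift.{u} M)) = ⊤ := by
  ext x; constructor <;> intro <;> trivial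

private lemma submoduleUp_injective :
    Function.Injective (submoduleUp : Submodule R M → Submodule (ULift.{v} R) (ULift.{u} M)) := by
  intro N₁ N₂ h
  ext x
  have h1 : (ULift.up.{u} x) ∈ submoduleUp.{u,v} N₁ ↔ (ULift.up.{u} x) ∈ submoduleUp.{u,v} N₂ := by rw [h]
  exact h1

private def submoduleDown (N' : Submodule (ULift.{v} R) (ULift.{u} M)) : Submodule R M where
  carrier := {x | ULift.up.{u} x ∈ N'}
  add_mem' := fun {a b} ha hb => N'.add_mem ha hb
  zero_mem' := N'.zero_mem
  smul_mem' := fun c {x} hx => N'.smul_mem (ULift.up.{v} c) hx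

private lemma isNoetherian_ulift [IsNoetherianRing R] [Module.Finite R M] :
    IsNoetherian (ULift.{v} R) (ULift.{u} M) := by
  rw [← monotone_stabilizes_iff_noetherian]
  intro f
  have hmono : Monotone (fun n => submoduleDown (f n)) := by
    intro a b hab x hx
    exact f.monotone hab hx
  obtain ⟨n₀, hn₀⟩ := (monotone_stabilizes_iff_noetherian.2
    (inferInstance : IsNoetherian R M)) ⟨fun n => submoduleDown (f n), hmono⟩
  refine ⟨n₀, fun m hm => ?_⟩
  have := hn₀ m hm
  ext x
  have h1 : x.down ∈ submoduleDown (f n₀) ↔ x.down ∈ submoduleDown (f m) := by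
    change ({ toFun := fun n => submoduleDown (f n), monotone' := hmono } : ℕ →o _) n₀ =
      ({ toFun := fun n => submoduleDown (f n), monotone' := hmono } : ℕ →o _) m at this
    rw [show submoduleDown (f n₀) =
      ({ toFun := fun n => submoduleDown (f n), monotone' := hmono } : ℕ →o _) n₀ from rfl, this]
    rfl
  exact h1

private lemma moduleFinite_ulift [IsNoetherianRing R] [Module.Finite R M] :
    Module.Finite (ULift.{v} R) (ULift.{u} M) := by
  have := isNoetherian_ulift (R := R) (M := M)
  exact Module.finite_def.2 (IsNoetherian.noetherian ⊤)

private lemma isNoetherianRing_ulift [IsNoetherianRing R] :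
    IsNoetherianRing (ULift.{v} R) :=
  isNoetherianRing_of_ringEquiv R (ULift.ringEquiv).symm

-- general-universe Artin-Rees, weak form
private lemma AR1' [IsNoetherianRing R] [Module.Finite R M] (I : Ideal R) (N : Submodule R M) :
    ∃ k : ℕ, ∀ n ≥ k, ((I ^ n • ⊤ : Submodule R M) ⊓ N) ≤ I ^ (n - k) • N := by
  have h1 := isNoetherianRing_ulift.{u,v} (R := R)
  have h2 := moduleFinite_ulift (R := R) (M := M)
  obtain ⟨k, hk⟩ := AR1 (idealUp I : Ideal (ULift.{v} R)) (submoduleUp N)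
  refine ⟨k, fun n hn x hx => ?_⟩
  have hx' : (ULift.up.{u} x) ∈ ((idealUp I : Ideal (ULift.{v} R)) ^ n • ⊤ ⊓ submoduleUp N) := by
    constructor
    · rw [← submoduleUp_top (R := R) (M := M)]
      exact (mem_pow_smul_up I n ⊤ (ULift.up.{u} x)).2 hx.1
    · exact hx.2
  have := hk n hn hx'
  exact (mem_pow_smul_up I (n - k) N (ULift.up.{u} x)).1 this

-- general-universe colon stability
private lemma AR2' [IsNoetherianRing R] [Module.Finite R M] (I : Ideal R) :
    ∃ k : ℕ, ∀ j ≥ k,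
      (((I ^ (j+2) • ⊤ : Submodule R M).colonBy I) ⊓ (I ^ j • ⊤ : Submodule R M))
        ≤ (I ^ (j+1) • ⊤ : Submodule R M) := by
  have h1 := isNoetherianRing_ulift.{u,v} (R := R)
  have h2 := moduleFinite_ulift (R := R) (M := M)
  obtain ⟨k, hk⟩ := AR2 (M := ULift.{u} M) (idealUp I : Ideal (ULift.{v} R))
  refine ⟨k, fun j hj x hx => ?_⟩
  have hx' : (ULift.up.{u} x) ∈
      ((((idealUp I : Ideal (ULift.{v} R)) ^ (j+2) • ⊤ :
        Submodule (ULift.{v} R) (ULift.{u} M)).colonBy (idealUp I))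
        ⊓ ((idealUp I : Ideal (ULift.{v} R)) ^ j • ⊤)) := by
    constructor
    · intro r hr
      have hdown : r.down • x ∈ (I ^ (j+2) • ⊤ : Submodule R M) := hx.1 r.down hr
      rw [← submoduleUp_top (R := R) (M := M)]
      exact (mem_pow_smul_up I (j+2) ⊤ (r • ULift.up.{u} x)).2 hdown
    · rw [← submoduleUp_top (R := R) (M := M)]
      exact (mem_pow_smul_up I j ⊤ (ULift.up.{u} x)).2 hx.2
  have := hk j hj hx'
  rw [← submoduleUp_top (R := R) (M := M)] at this
  exact (mem_pow_smul_up I (j+1) ⊤ (ULift.up.{u} x)).1 this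

end Transfer2

section MainAlg

variable {R : Type u} {M' : Type v} [CommRing R] [IsNoetherianRing R] [IsLocalRing R]
    [AddCommGroup M'] [Module R M'] [Module.Finite R M']

private lemma colon_le_pow_smul_of_socle_eq_bot
    (I : Ideal R) (hI : I.radical = maximalIdeal R)
    (hsoc : (⊥ : Submodule R M').colonBy (maximalIdeal R) = ⊥) :
    ∃ N : ℕ, ∀ n ≥ N, ∀ x : M',
      (∀ r ∈ maximalIdeal R, r • x ∈ (I ^ (n+1) • ⊤ : Submodule R M')) →
      x ∈ (I ^ n • ⊤ : Submodule R M') := by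
  obtain ⟨b, hbI, hreg⟩ := exists_isSMulRegular_of_socle_eq_bot I hI hsoc
  have hIm : I ≤ maximalIdeal R := hI ▸ Ideal.le_radical
  obtain ⟨k2, hk2⟩ := AR1' I (LinearMap.range (LinearMap.lsmul R M' b))
  obtain ⟨k0, hk0⟩ := AR2' I (M := M')
  refine ⟨k0 + k2 + 1, fun n hn x hx => ?_⟩
  have hbx : b • x ∈ ((I ^ (n+1) • ⊤ : Submodule R M') ⊓
      LinearMap.range (LinearMap.lsmul R M' b)) :=
    ⟨hx b (hIm hbI), ⟨x, rfl⟩⟩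
  have h1 := hk2 (n+1) (by omega) hbx
  have h2 : (I ^ (n+1-k2) • LinearMap.range (LinearMap.lsmul R M' b) : Submodule R M')
      = Submodule.map (LinearMap.lsmul R M' b) (I ^ (n+1-k2) • ⊤) := by
    rw [Submodule.map_smul'', Submodule.map_top]
  rw [h2] at h1
  obtain ⟨y, hy, hyx⟩ := h1
  have hxy : y = x := hreg (show b • y = b • x from hyx)
  rw [hxy] at hy
  have entry : x ∈ (I ^ (k0+1) • ⊤ : Submodule R M') :=
    Submodule.smul_mono (Ideal.pow_le_pow_right (by omega)) le_rfl hy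
  have climb : ∀ j, k0 + 1 ≤ j → j ≤ n → x ∈ (I ^ j • ⊤ : Submodule R M') := by
    intro j hj
    induction j, hj using Nat.le_induction with
    | base => intro _; exact entry
    | succ j hj IH =>
      intro hjn
      have hxj : x ∈ (I ^ j • ⊤ : Submodule R M') := IH (by omega)
      refine hk0 j (by omega) ⟨?_, hxj⟩
      intro r hr
      exact Submodule.smul_mono (Ideal.pow_le_pow_right (by omega)) le_rfl (hx r (hIm hr))
  exact climb n (by omega) le_rfl

end MainAlg

section MainSplit

variable {R : Type u} {M : Type v} [CommRing R] [IsNoetherianRing R] [IsLocalRing R]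
    [AddCommGroup M] [Module R M] [Module.Finite R M]

private lemma main_split (I : Ideal R) (hI : I.radical = maximalIdeal R) :
    ∃ N : ℕ, ∀ n ≥ N,
      (((⊥ : Submodule R M).colonBy (maximalIdeal R)) ⊓ (I ^ n • ⊤ : Submodule R M) = ⊥)
      ∧ ((I ^ (n+1) • ⊤ : Submodule R M).colonBy (maximalIdeal R)
          ≤ ((⊥ : Submodule R M).colonBy (maximalIdeal R)) ⊔ (I ^ n • ⊤ : Submodule R M)) := by
  set m := maximalIdeal R with hm
  have hIm : I ≤ m := hI ▸ Ideal.le_radical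
  -- stabilize the chain of colon submodules
  have hmono : Monotone (fun k => (⊥ : Submodule R M).colonBy (m ^ k)) := by
    intro k l hkl x hx r hr
    exact hx r (Ideal.pow_le_pow_right hkl hr)
  obtain ⟨t, ht⟩ := (monotone_stabilizes_iff_noetherian.2
    (inferInstance : IsNoetherian R M)) ⟨fun k => (⊥ : Submodule R M).colonBy (m ^ k), hmono⟩
  set W : Submodule R M := (⊥ : Submodule R M).colonBy (m ^ (t+1)) with hW
  have hWc : ∀ k ≥ t, (⊥ : Submodule R M).colonBy (m ^ k) = W := by
    intro k hk
    have h1 := ht k hk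
    have h2 := ht (t+1) (by omega)
    exact h1.symm.trans h2
  have hWkey : ∀ x : M, (∀ r ∈ m, r • x ∈ W) → x ∈ W := by
    intro x hx
    rw [← hWc (t+2) (by omega)]
    intro r hr
    have hr' : r ∈ (m ^ (t+1) : Ideal R) * m := by
      rw [← pow_succ]; exact hr
    simp only [Submodule.mem_bot]
    refine Submodule.mul_induction_on hr' (fun a ha b hb => ?_) (fun r₁ r₂ h₁ h₂ => ?_)
    · have hbx : b • x ∈ W := hx b hb
      have := hbx a ha
      simp only [Submodule.mem_bot] at this
      rw [mul_smul]
      exact this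
    · rw [add_smul, h₁, h₂, add_zero]
  have hSocW : (⊥ : Submodule R M).colonBy m ≤ W := by
    intro x hx r hr
    exact hx r (Ideal.pow_le_self (by omega) hr)
  obtain ⟨k1, hk1⟩ := AR1' I W
  have hbot : ∀ n ≥ k1 + (t+1), (I ^ n • ⊤ : Submodule R M) ⊓ W = ⊥ := by
    intro n hn
    refine le_bot_iff.1 ?_
    refine le_trans (hk1 n (by omega)) ?_
    refine Submodule.smul_le.2 (fun r hr w hw => ?_)
    have hrm : r ∈ (m ^ (t+1) : Ideal R) := by
      have h1 : (I ^ (n - k1) : Ideal R) ≤ m ^ (n - k1) := Ideal.pow_right_mono hIm _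
      have h2 : (m ^ (n - k1) : Ideal R) ≤ m ^ (t+1) := Ideal.pow_le_pow_right (by omega)
      exact h2 (h1 hr)
    exact hw r hrm
  -- the quotient module
  haveI : Module.Finite R (M ⧸ W) := Module.Finite.of_surjective W.mkQ W.mkQ_surjective
  have hsoc' : (⊥ : Submodule R (M ⧸ W)).colonBy m = ⊥ := by
    refine le_antisymm ?_ bot_le
    intro z hz
    obtain ⟨x, rfl⟩ := W.mkQ_surjective z
    simp only [Submodule.mem_bot]
    have hxW : x ∈ W := by
      refine hWkey x (fun r hr => ?_)
      have h5 := hz r hr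
      simp only [Submodule.mem_bot] at h5
      rw [← map_smul] at h5
      rw [W.mkQ_apply] at h5
      exact (Submodule.Quotient.mk_eq_zero W).1 h5
    rw [W.mkQ_apply]
    exact (Submodule.Quotient.mk_eq_zero W).2 hxW
  obtain ⟨N₂, hN₂⟩ := colon_le_pow_smul_of_socle_eq_bot (M' := M ⧸ W) I hI hsoc'
  have hmapsmul : ∀ j : ℕ, Submodule.map W.mkQ (I ^ j • ⊤ : Submodule R M)
      = (I ^ j • ⊤ : Submodule R (M ⧸ W)) := by
    intro j
    rw [Submodule.map_smul'', Submodule.map_top, Submodule.range_mkQ]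
  refine ⟨k1 + t + 1 + N₂, fun n hn => ⟨?_, ?_⟩⟩
  · refine le_bot_iff.1 ?_
    calc ((⊥ : Submodule R M).colonBy m) ⊓ (I ^ n • ⊤ : Submodule R M)
        ≤ W ⊓ (I ^ n • ⊤ : Submodule R M) := inf_le_inf_right _ hSocW
      _ = (I ^ n • ⊤ : Submodule R M) ⊓ W := inf_comm _ _
      _ ≤ ⊥ := (hbot n (by omega)).le
  · intro x hx
    have hx' : ∀ r ∈ m, r • (W.mkQ x) ∈ (I ^ (n+1) • ⊤ : Submodule R (M ⧸ W)) := by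
      intro r hr
      rw [← map_smul, ← hmapsmul (n+1)]
      exact Submodule.mem_map_of_mem (hx r hr)
    have hq := hN₂ n (by omega) (W.mkQ x) hx'
    rw [← hmapsmul n] at hq
    obtain ⟨y, hy, hyx⟩ := hq
    have hwW : x - y ∈ W := by
      have h6 : W.mkQ (x - y) = 0 := by
        rw [map_sub, hyx, sub_self]
      rw [W.mkQ_apply] at h6
      exact (Submodule.Quotient.mk_eq_zero W).1 h6
    have hwSoc : x - y ∈ (⊥ : Submodule R M).colonBy m := by
      intro r hr
      have h1 : r • (x - y) ∈ (I ^ n • ⊤ : Submodule R M) := by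
        rw [smul_sub]
        refine Submodule.sub_mem _ ?_ ((I ^ n • ⊤ : Submodule R M).smul_mem r hy)
        exact Submodule.smul_mono (Ideal.pow_le_pow_right (by omega)) le_rfl (hx r hr)
      have h2 : r • (x - y) ∈ W := W.smul_mem r hwW
      have h3 : r • (x - y) ∈ (I ^ n • ⊤ : Submodule R M) ⊓ W := ⟨h1, h2⟩
      rw [hbot n (by omega)] at h3
      exact h3
    have : (x - y) + y ∈ ((⊥ : Submodule R M).colonBy m) ⊔ (I ^ n • ⊤ : Submodule R M) :=
      Submodule.add_mem_sup hwSoc hy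
    rwa [sub_add_cancel] at this

end MainSplit


section LengthWrappers

private lemma moduleLength_congr {R : Type*} [Ring R] {M N : Type*} [AddCommGroup M] [Module R M]
    [AddCommGroup N] [Module R N] (e : M ≃ₗ[R] N) : moduleLength R M = moduleLength R N := by
  have h := Order.height_orderIso (Submodule.orderIsoMapComap e) (⊤ : Submodule R M)
  have htop : Submodule.orderIsoMapComap e (⊤ : Submodule R M) = ⊤ := by
    show Submodule.map (e : M →ₗ[R] N) (⊤ : Submodule R M) = ⊤
    rw [Submodule.map_top]
    exact LinearMap.range_eq_top.2 e.surjective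
  rw [htop] at h
  exact h.symm

private lemma moduleLength_add {R X : Type*} [Ring R] [AddCommGroup X] [Module R X]
    (N : Submodule R X) :
    moduleLength R X = moduleLength R ↥N + moduleLength R (X ⧸ N) :=
  le_antisymm (moduleLength_aux_le N) (moduleLength_aux_ge N)

end LengthWrappers

/-- Eventually `ℓ((I^{n+1}M :_M 𝔪)/I^{n+1}M)
  = ℓ([(I^{n+1}M :_M 𝔪) ∩ I^n M]/I^{n+1}M) + ℓ(0 :_M 𝔪)`. -/
theorem statement12 {R M : Type*} [CommRing R] [IsNoetherianRing R] [IsLocalRing R]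
    [AddCommGroup M] [Module R M] [Module.Finite R M]
    (I : Ideal R) (hI : I.radical = maximalIdeal R) :
    ∃ N : ℕ, ∀ n ≥ N,
      moduleLength R ↥(Submodule.map (I ^ (n + 1) • ⊤ : Submodule R M).mkQ
          ((I ^ (n + 1) • ⊤ : Submodule R M).colonBy (maximalIdeal R)))
        = moduleLength R ↥(Submodule.map (I ^ (n + 1) • ⊤ : Submodule R M).mkQ
            ((I ^ (n + 1) • ⊤ : Submodule R M).colonBy (maximalIdeal R) ⊓ (I ^ n • ⊤)))
          + moduleLength R ↥((⊥ : Submodule R M).colonBy (maximalIdeal R)) := by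
  obtain ⟨N, hN⟩ := main_split (M := M) I hI
  refine ⟨N, fun n hn => ?_⟩
  obtain ⟨h1, h2⟩ := hN n hn
  set m : Ideal R := maximalIdeal R with hm
  set Jn : Submodule R M := I ^ (n+1) • ⊤ with hJn
  set In : Submodule R M := I ^ n • ⊤ with hIn
  set T : Submodule R M := Jn.colonBy m with hT
  set Soc : Submodule R M := (⊥ : Submodule R M).colonBy m with hSoc
  set A : Submodule R (M ⧸ Jn) := Submodule.map Jn.mkQ T with hA
  set B : Submodule R (M ⧸ Jn) := Submodule.map Jn.mkQ (T ⊓ In) with hB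
  have hBA : B ≤ A := Submodule.map_mono inf_le_left
  set B' : Submodule R ↥A := Submodule.comap A.subtype B with hB'
  have hlen1 : moduleLength R ↥A = moduleLength R ↥B' + moduleLength R (↥A ⧸ B') :=
    moduleLength_add B'
  have hlen2 : moduleLength R ↥B' = moduleLength R ↥B :=
    moduleLength_congr (Submodule.comapSubtypeEquivOfLe hBA)
  have hJnIn : Jn ≤ In :=
    Submodule.smul_mono (Ideal.pow_le_pow_right (by omega)) le_rfl
  have hSocT : Soc ≤ T := by
    intro x hx r hr
    have h0 := hx r hr
    simp only [Submodule.mem_bot] at h0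
    rw [h0]
    exact Jn.zero_mem
  have hψ : ∀ c : ↥Soc, Jn.mkQ c.1 ∈ A := fun c => Submodule.mem_map_of_mem (hSocT c.2)
  set φ : ↥Soc →ₗ[R] (↥A ⧸ B') :=
    B'.mkQ.comp ((Jn.mkQ.comp Soc.subtype).codRestrict A hψ) with hφ
  have hinj : Function.Injective φ := by
    rw [← LinearMap.ker_eq_bot]
    rw [LinearMap.ker_eq_bot']
    intro c hc
    have hzB' : ((Jn.mkQ.comp Soc.subtype).codRestrict A hψ) c ∈ B' := by
      have h9 : B'.mkQ (((Jn.mkQ.comp Soc.subtype).codRestrict A hψ) c) = 0 := hc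
      rw [B'.mkQ_apply, Submodule.Quotient.mk_eq_zero] at h9
      exact h9
    have hzB : Jn.mkQ c.1 ∈ B := hzB'
    obtain ⟨y, hyTI, hy⟩ := hzB
    have hcy : c.1 - y ∈ Jn := by
      have : (Submodule.Quotient.mk c.1 : M ⧸ Jn) = Submodule.Quotient.mk y := by
        rw [← Jn.mkQ_apply, ← Jn.mkQ_apply, hy]
      exact (Submodule.Quotient.eq Jn).1 this
    have hcIn : c.1 ∈ In := by
      have : (c.1 - y) + y ∈ In := In.add_mem (hJnIn hcy) hyTI.2
      rwa [sub_add_cancel] at this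
    have : c.1 ∈ Soc ⊓ In := ⟨c.2, hcIn⟩
    rw [h1] at this
    exact Subtype.ext this
  have hsurj : Function.Surjective φ := by
    intro z
    obtain ⟨a, rfl⟩ := B'.mkQ_surjective z
    obtain ⟨x, hxT, hxa⟩ := a.2
    obtain ⟨w, hw, v, hv, hwv⟩ := Submodule.mem_sup.1 (h2 hxT)
    refine ⟨⟨w, hw⟩, ?_⟩
    rw [hφ]
    show B'.mkQ (((Jn.mkQ.comp Soc.subtype).codRestrict A hψ) ⟨w, hw⟩) = B'.mkQ a
    rw [B'.mkQ_apply, B'.mkQ_apply]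
    rw [Submodule.Quotient.eq B']
    show (((Jn.mkQ.comp Soc.subtype).codRestrict A hψ) ⟨w, hw⟩ - a : ↥A).1 ∈ B
    have hval : (((Jn.mkQ.comp Soc.subtype).codRestrict A hψ) ⟨w, hw⟩ - a : ↥A).1
        = Jn.mkQ w - Jn.mkQ x := by
      show Jn.mkQ w - a.1 = Jn.mkQ w - Jn.mkQ x
      rw [hxa]
    rw [hval, ← map_sub]
    have hvT : v ∈ T ⊓ In := by
      constructor
      · have : x - w ∈ T := T.sub_mem hxT (hSocT hw)
        have hxwv : x - w = v := by rw [← hwv]; abel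
        rwa [hxwv] at this
      · exact hv
    have hwx : w - x = -v := by rw [← hwv]; abel
    rw [hwx, map_neg]
    exact B.neg_mem (Submodule.mem_map_of_mem hvT)
  have hlen3 : moduleLength R (↥A ⧸ B') = moduleLength R ↥Soc :=
    (moduleLength_congr (LinearEquiv.ofBijective φ ⟨hinj, hsurj⟩)).symm
  rw [hlen1, hlen2, hlen3]
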